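/- Let NN be a K-way, L-layer fully-connected network (L ≥ 2) with weight matrices w_1,…,w_L, bias vectors b_1,…,b_L, and componentwise activation f : ℝ → ℝ Lipschitz with constant C ≥ 0, whose logits are θ(x) = w_L h_{L−1}(x) + b_L, and whose output layer additionally applies a squeezing function f_s : ℝ → ℝ, Lipschitz with constant C_s ≥ 0, before softmax: NN(x)_k = exp(f_s(θ_k(x))) / Σ_{p=1}^K exp(f_s(θ_p(x))). Let ξ be a perturbation vector and set η' = C_s · C^{L−1} · max_{k=1,…,K} (|w_L|·|w_{L−1}|⋯|w_1|·|ξ|)_k, where |·| denotes entrywise absolute value. Then for every k, |NN(x)_k − NN(x+ξ)_k| ≤ exp(f_s(θ_k(x))) · (e^{η'} − e^{−η'}) / Σ_{p=1}^K exp(f_s(θ_p(x+ξ))). -/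

import Mathlib

/-- Hidden states of a fully-connected network: `hiddenState dims w b f i x` is `h_i(x)`,
with `h_0(x) = x` and `h_{i+1}(x) = f ∘ (w_{i+1} h_i(x) + b_{i+1})` (the paper's `w_{i+1}`
is `w i` here, i.e. the paper's 1-indexed `w_i` is the 0-indexed `w (i-1)`). -/
def hiddenState (dims : ℕ → ℕ)
    (w : (i : ℕ) → Matrix (Fin (dims (i + 1))) (Fin (dims i)) ℝ)
    (b : (i : ℕ) → Fin (dims (i + 1)) → ℝ) (f : ℝ → ℝ) :
    (i : ℕ) → (Fin (dims 0) → ℝ) → (Fin (dims i) → ℝ)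
  | 0, x => x
  | i + 1, x => fun j => f ((w i).mulVec (hiddenState dims w b f i x) j + b i j)

/-- `absChain dims w ξ i = |w_i|·|w_{i-1}|⋯|w_1|·|ξ|` (entrywise absolute values),
a vector of size `dims i`; the base case is `|ξ|`. -/
def absChain (dims : ℕ → ℕ)
    (w : (i : ℕ) → Matrix (Fin (dims (i + 1))) (Fin (dims i)) ℝ)
    (ξ : Fin (dims 0) → ℝ) :
    (i : ℕ) → (Fin (dims i) → ℝ)
  | 0 => fun j => |ξ j|
  | i + 1 => ((w i).map (fun a => |a|)).mulVec (absChain dims w ξ i)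

/-!
By induction over the layers, the Lipschitz activation and the triangle inequality give
`|h_i(x) - h_i(x + ξ)| ≤ C^i |w_i|⋯|w_1||ξ|` entrywise, so every squeezed logit moves by at
most `η'`. Hence `exp(f_s(θ_k))` and the partition function each change by a factor in
`[e^{-η'}, e^{η'}]`, which bounds the change of their quotient.
-/

open Finset

lemma abs_div_sub_div_le_of_scaled_bounds {a a' S S' lo hi : ℝ} (ha : 0 ≤ a)
    (hS : 0 < S) (hS' : 0 < S') (ha'_lo : lo * a ≤ a') (ha'_hi : a' ≤ hi * a)
    (hS'_lo : lo * S ≤ S') (hS'_hi : S' ≤ hi * S) :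
    |a / S - a' / S'| ≤ a * (hi - lo) / S' := by
  have hnum : |a * S' - S * a'| ≤ a * (hi - lo) * S := by
    rw [abs_le]
    constructor <;> nlinarith [mul_le_mul_of_nonneg_left hS'_lo ha,
      mul_le_mul_of_nonneg_left hS'_hi ha, mul_le_mul_of_nonneg_left ha'_lo hS.le,
      mul_le_mul_of_nonneg_left ha'_hi hS.le]
  rw [div_sub_div _ _ hS.ne' hS'.ne', abs_div, abs_of_pos (mul_pos hS hS'),
    div_le_div_iff₀ (mul_pos hS hS') hS']
  calc |a * S' - S * a'| * S' ≤ a * (hi - lo) * S * S' := by gcongr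
    _ = a * (hi - lo) * (S * S') := by ring

lemma exp_neg_mul_exp_le_exp_of_abs_sub_le {s t η : ℝ} (h : |s - t| ≤ η) :
    Real.exp (-η) * Real.exp s ≤ Real.exp t := by
  rw [← Real.exp_add]
  exact Real.exp_le_exp.mpr (by linarith [(abs_le.mp h).2])

lemma exp_le_exp_mul_exp_of_abs_sub_le {s t η : ℝ} (h : |s - t| ≤ η) :
    Real.exp t ≤ Real.exp η * Real.exp s := by
  rw [← Real.exp_add]
  exact Real.exp_le_exp.mpr (by linarith [(abs_le.mp h).1])

lemma abs_softmax_sub_le {ι : Type*} [Fintype ι] {z z' : ι → ℝ} {η : ℝ}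
    (h : ∀ p, |z p - z' p| ≤ η) (k : ι) :
    |Real.exp (z k) / ∑ p, Real.exp (z p) - Real.exp (z' k) / ∑ p, Real.exp (z' p)| ≤
      Real.exp (z k) * (Real.exp η - Real.exp (-η)) / ∑ p, Real.exp (z' p) := by
  have hsum_pos : ∀ u : ι → ℝ, 0 < ∑ p, Real.exp (u p) := fun u =>
    sum_pos (fun p _ => Real.exp_pos _) ⟨k, mem_univ k⟩
  refine abs_div_sub_div_le_of_scaled_bounds (Real.exp_pos _).le (hsum_pos z) (hsum_pos z')
    (exp_neg_mul_exp_le_exp_of_abs_sub_le (h k)) (exp_le_exp_mul_exp_of_abs_sub_le (h k)) ?_ ?_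
  · rw [mul_sum]
    exact sum_le_sum fun p _ => exp_neg_mul_exp_le_exp_of_abs_sub_le (h p)
  · rw [mul_sum]
    exact sum_le_sum fun p _ => exp_le_exp_mul_exp_of_abs_sub_le (h p)

lemma abs_mulVec_sub_le_of_abs_sub_le {m n : Type*} [Fintype n] (M : Matrix m n ℝ)
    {u v e : n → ℝ} {c : ℝ} (h : ∀ l, |u l - v l| ≤ c * e l) (j : m) :
    |M.mulVec u j - M.mulVec v j| ≤ c * (M.map abs).mulVec e j := by
  rw [← Pi.sub_apply, ← Matrix.mulVec_sub]
  calc |∑ l, M j l * (u - v) l| ≤ ∑ l, |M j l| * (c * e l) :=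
        (abs_sum_le_sum_abs _ _).trans <| sum_le_sum fun l _ => by
          rw [abs_mul]
          exact mul_le_mul_of_nonneg_left (h l) (abs_nonneg _)
    _ = c * (M.map abs).mulVec e j := by
        simp only [Matrix.mulVec, dotProduct, Matrix.map_apply, mul_sum]
        exact sum_congr rfl fun l _ => by ring

lemma abs_hiddenState_sub_le (dims : ℕ → ℕ)
    (w : (i : ℕ) → Matrix (Fin (dims (i + 1))) (Fin (dims i)) ℝ)
    (b : (i : ℕ) → Fin (dims (i + 1)) → ℝ) {f : ℝ → ℝ} {C : ℝ} (hC : 0 ≤ C)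
    (hf : ∀ s t : ℝ, |f s - f t| ≤ C * |s - t|) (x ξ : Fin (dims 0) → ℝ) :
    ∀ i j, |hiddenState dims w b f i x j - hiddenState dims w b f i (x + ξ) j| ≤
      C ^ i * absChain dims w ξ i j
  | 0, j => by simp [hiddenState, absChain]
  | i + 1, j => by
    calc |hiddenState dims w b f (i + 1) x j - hiddenState dims w b f (i + 1) (x + ξ) j|
        ≤ C * |(w i).mulVec (hiddenState dims w b f i x) j -
            (w i).mulVec (hiddenState dims w b f i (x + ξ)) j| :=
          (hf _ _).trans_eq (by rw [add_sub_add_right_eq_sub])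
      _ ≤ C * (C ^ i * absChain dims w ξ (i + 1) j) := by
          gcongr
          exact abs_mulVec_sub_le_of_abs_sub_le _ (abs_hiddenState_sub_le dims w b hC hf x ξ i) j
      _ = C ^ (i + 1) * absChain dims w ξ (i + 1) j := by ring

theorem squeezed_softmax_output_variation_bound_general (L : ℕ) (dims : ℕ → ℕ)
    (hK : 0 < dims (L - 1 + 1))
    (w : (i : ℕ) → Matrix (Fin (dims (i + 1))) (Fin (dims i)) ℝ)
    (b : (i : ℕ) → Fin (dims (i + 1)) → ℝ)
    (f : ℝ → ℝ) (C : ℝ) (hC : 0 ≤ C)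
    (hf : ∀ s t : ℝ, |f s - f t| ≤ C * |s - t|)
    (fs : ℝ → ℝ) (Cs : ℝ) (hCs : 0 ≤ Cs)
    (hfs : ∀ s t : ℝ, |fs s - fs t| ≤ Cs * |s - t|)
    (θ : (Fin (dims 0) → ℝ) → Fin (dims (L - 1 + 1)) → ℝ)
    (hθ : ∀ y k, θ y k =
      (w (L - 1)).mulVec (hiddenState dims w b f (L - 1) y) k + b (L - 1) k)
    (NN : (Fin (dims 0) → ℝ) → Fin (dims (L - 1 + 1)) → ℝ)
    (hNN : ∀ y k, NN y k = Real.exp (fs (θ y k)) / ∑ p, Real.exp (fs (θ y p)))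
    (x ξ : Fin (dims 0) → ℝ) (η' : ℝ)
    (hη' : η' = Cs * C ^ (L - 1) * Finset.univ.sup'
        (Finset.univ_nonempty_iff.mpr (Fin.pos_iff_nonempty.mp hK))
        (fun k => absChain dims w ξ (L - 1 + 1) k)) :
    ∀ k : Fin (dims (L - 1 + 1)),
      |NN x k - NN (x + ξ) k| ≤
        Real.exp (fs (θ x k)) * (Real.exp η' - Real.exp (-η')) /
          ∑ p, Real.exp (fs (θ (x + ξ) p)) := by
  have hlogit : ∀ p, |θ x p - θ (x + ξ) p| ≤ C ^ (L - 1) * absChain dims w ξ (L - 1 + 1) p := by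
    intro p
    rw [hθ, hθ, add_sub_add_right_eq_sub]
    exact abs_mulVec_sub_le_of_abs_sub_le _ (abs_hiddenState_sub_le dims w b hC hf x ξ _) p
  have hsqueezed : ∀ p, |fs (θ x p) - fs (θ (x + ξ) p)| ≤ η' := fun p =>
    calc |fs (θ x p) - fs (θ (x + ξ) p)|
        ≤ Cs * (C ^ (L - 1) * absChain dims w ξ (L - 1 + 1) p) :=
          (hfs _ _).trans (mul_le_mul_of_nonneg_left (hlogit p) hCs)
      _ ≤ η' := by
          rw [hη', mul_assoc]
          gcongr
          exact le_sup' (fun q => absChain dims w ξ (L - 1 + 1) q) (mem_univ p)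
  intro k
  rw [hNN, hNN]
  exact abs_softmax_sub_le hsqueezed k

/-- As in Statement 1, but the output layer additionally applies a
squeezing function `f_s : ℝ → ℝ`, Lipschitz with constant `C_s ≥ 0`, before softmax:
`NN(x)_k = exp(f_s(θ_k(x))) / ∑_p exp(f_s(θ_p(x)))`. With
`η' = C_s · C^{L-1} · max_k (|w_L|·|w_{L-1}|⋯|w_1|·|ξ|)_k`, for every `k`,
`|NN(x)_k − NN(x+ξ)_k| ≤ exp(f_s(θ_k(x)))·(e^{η'} − e^{−η'}) / ∑_p exp(f_s(θ_p(x+ξ)))`. -/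
theorem squeezed_softmax_output_variation_bound (L : ℕ) (hL : 2 ≤ L) (dims : ℕ → ℕ)
    (hK : 0 < dims (L - 1 + 1))
    (w : (i : ℕ) → Matrix (Fin (dims (i + 1))) (Fin (dims i)) ℝ)
    (b : (i : ℕ) → Fin (dims (i + 1)) → ℝ)
    (f : ℝ → ℝ) (C : ℝ) (hC : 0 ≤ C)
    (hf : ∀ s t : ℝ, |f s - f t| ≤ C * |s - t|)
    (fs : ℝ → ℝ) (Cs : ℝ) (hCs : 0 ≤ Cs)
    (hfs : ∀ s t : ℝ, |fs s - fs t| ≤ Cs * |s - t|)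
    (θ : (Fin (dims 0) → ℝ) → Fin (dims (L - 1 + 1)) → ℝ)
    (hθ : ∀ y k, θ y k =
      (w (L - 1)).mulVec (hiddenState dims w b f (L - 1) y) k + b (L - 1) k)
    (NN : (Fin (dims 0) → ℝ) → Fin (dims (L - 1 + 1)) → ℝ)
    (hNN : ∀ y k, NN y k = Real.exp (fs (θ y k)) / ∑ p, Real.exp (fs (θ y p)))
    (x ξ : Fin (dims 0) → ℝ) (η' : ℝ)
    (hη' : η' = Cs * C ^ (L - 1) * Finset.univ.sup'
        (Finset.univ_nonempty_iff.mpr (Fin.pos_iff_nonempty.mp hK))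
        (fun k => absChain dims w ξ (L - 1 + 1) k)) :
    ∀ k : Fin (dims (L - 1 + 1)),
      |NN x k - NN (x + ξ) k| ≤
        Real.exp (fs (θ x k)) * (Real.exp η' - Real.exp (-η')) /
          ∑ p, Real.exp (fs (θ (x + ξ) p)) :=
  squeezed_softmax_output_variation_bound_general L dims hK w b f C hC hf fs Cs hCs hfs θ hθ NN hNN
    x ξ η' hη'
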